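/- arXiv:2306.12250 — 2 statements merged into one kernel-verified Lean document; each statement's English description precedes it below -/
import Mathlib

section
/- If every point of a poset P is G-isolated for a finite family G of upsets (i.e., x ∼^G_ω y implies x = y), and P is finite, then two distinct points of P are separated by some term-definable upset generated from G using intersection, union, and Heyting implication of upsets. -/
/-- The bisimulation-style relations `∼^G_n` on a preordered set, relative to a
family `G` of subsets. -/
def simRel {α : Type*} [Preorder α] (G : Set (Set α)) : ℕ → α → α → Prop
  | 0 => fun x y => ∀ g ∈ G, (x ∈ g ↔ y ∈ g)
  | n + 1 => fun x y =>
      (∀ z, x ≤ z → ∃ w, y ≤ w ∧ simRel G n z w) ∧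
      (∀ w, y ≤ w → ∃ z, x ≤ z ∧ simRel G n z w)


/-- Heyting implication of subsets of a poset: `U → V = (↓(U \ V))ᶜ`,
equivalently the set of points all of whose successors in `U` lie in `V`. -/
def himpSet {α : Type*} [Preorder α] (U V : Set α) : Set α :=
  {x | ∀ y, x ≤ y → y ∈ U → y ∈ V}

/-- Membership in the Heyting subalgebra of `Up(P)` generated by `G`:
the closure of `G` under `∅`, `univ`, intersection, union and Heyting
implication of upsets. -/
inductive HGen {α : Type*} [Preorder α] (G : Set (Set α)) : Set α → Prop
  | base {U : Set α} : U ∈ G → HGen G U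
  | bot : HGen G ∅
  | top : HGen G Set.univ
  | inf {U V : Set α} : HGen G U → HGen G V → HGen G (U ∩ V)
  | sup {U V : Set α} : HGen G U → HGen G V → HGen G (U ∪ V)
  | himp {U V : Set α} : HGen G U → HGen G V → HGen G (himpSet U V)


/-!
If `x` and `y` are not `∼_ω`-related they fail to be `∼_n`-related for some `n`, and by
induction on `n` such a pair is separated by a term-definable upset. At `n = 0` a generator
separates them. At `n + 1`, say some `z ≥ x` is `∼_n`-related to no `w ≥ y`; by induction `z`
is separated from every `w ≥ y`. As `P` is finite, so is the Heyting algebra generated by `G`,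
and with `A` the meet of its members containing `z` and `B` the join of those omitting `z`,
the implication `A → B` contains `y` but not `x`.
-/

section

variable {α : Type*} [Preorder α] {G : Set (Set α)}

lemma simRel_symm {n : ℕ} {x y : α} (h : simRel G n x y) : simRel G n y x := by
  induction n generalizing x y with
  | zero => exact fun g hg => (h g hg).symm
  | succ n ih =>
    exact ⟨fun z hz => (h.2 z hz).imp fun _ hw => ⟨hw.1, ih hw.2⟩,
      fun w hw => (h.1 w hw).imp fun _ hz => ⟨hz.1, ih hz.2⟩⟩

lemma HGen.sInter {S : Set (Set α)} (hS : S.Finite) (h : ∀ U ∈ S, HGen G U) :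
    HGen G (⋂₀ S) := by
  induction S, hS using Set.Finite.induction_on with
  | empty => simpa using HGen.top
  | insert _ _ ih =>
    rw [Set.sInter_insert]
    exact .inf (h _ (Set.mem_insert _ _)) (ih fun U hU => h U (Set.mem_insert_of_mem _ hU))

lemma HGen.sUnion {S : Set (Set α)} (hS : S.Finite) (h : ∀ U ∈ S, HGen G U) :
    HGen G (⋃₀ S) := by
  induction S, hS using Set.Finite.induction_on with
  | empty => simpa using HGen.bot
  | insert _ _ ih =>
    rw [Set.sUnion_insert]
    exact .sup (h _ (Set.mem_insert _ _)) (ih fun U hU => h U (Set.mem_insert_of_mem _ hU))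

variable (G) in
def HGenSeparated (x y : α) : Prop :=
  ∃ U : Set α, HGen G U ∧ ((x ∈ U ∧ y ∉ U) ∨ (y ∈ U ∧ x ∉ U))

lemma HGen.exists_mem_notMem_of_le_of_separated [Finite α] {x y z : α}
    (hxz : x ≤ z) (hsep : ∀ w, y ≤ w → HGenSeparated G z w) :
    ∃ U, HGen G U ∧ y ∈ U ∧ x ∉ U := by
  set A := ⋂₀ {U | HGen G U ∧ z ∈ U}
  set B := ⋃₀ {U | HGen G U ∧ z ∉ U}
  have hzA : z ∈ A := fun U hU => hU.2
  have hzB : z ∉ B := fun ⟨U, hU, hzU⟩ => hU.2 hzU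
  refine ⟨himpSet A B, .himp (.sInter (Set.toFinite _) fun U hU => hU.1)
    (.sUnion (Set.toFinite _) fun U hU => hU.1), fun w hyw hwA => ?_,
    fun hx => hzB (hx z hxz hzA)⟩
  obtain ⟨U, hU, ⟨hzU, hwU⟩ | ⟨hwU, hzU⟩⟩ := hsep w hyw
  · exact absurd (hwA U ⟨hU, hzU⟩) hwU
  · exact ⟨U, ⟨hU, hzU⟩, hwU⟩

lemma hGenSeparated_of_not_simRel [Finite α] {n : ℕ} {x y : α} (h : ¬ simRel G n x y) :
    HGenSeparated G x y := by
  induction n generalizing x y with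
  | zero =>
    obtain ⟨g, hg, hxy⟩ : ∃ g ∈ G, ¬ (x ∈ g ↔ y ∈ g) := by simpa [simRel] using h
    exact ⟨g, .base hg, by tauto⟩
  | succ n ih =>
    rw [simRel, not_and_or] at h
    push Not at h
    rcases h with ⟨z, hxz, hz⟩ | ⟨w, hyw, hw⟩
    · obtain ⟨U, hU, hyU, hxU⟩ := HGen.exists_mem_notMem_of_le_of_separated hxz
        fun w hyw => ih (hz w hyw)
      exact ⟨U, hU, .inr ⟨hyU, hxU⟩⟩
    · obtain ⟨U, hU, hxU, hyU⟩ := HGen.exists_mem_notMem_of_le_of_separated hyw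
        fun z hxz => ih (fun hzw => hw z hxz (simRel_symm hzw))
      exact ⟨U, hU, .inl ⟨hxU, hyU⟩⟩

end

theorem separation_of_isolated_general {α : Type*} [PartialOrder α] [Finite α]
    (G : Set (Set α))
    (hiso : ∀ x y : α, (∀ n, simRel G n x y) → x = y) :
    ∀ x y : α, x ≠ y →
      ∃ U : Set α, HGen G U ∧ ((x ∈ U ∧ y ∉ U) ∨ (y ∈ U ∧ x ∉ U)) := by
  intro x y hxy
  obtain ⟨n, hn⟩ : ∃ n, ¬ simRel G n x y := by
    by_contra! h
    exact hxy (hiso x y h)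
  exact hGenSeparated_of_not_simRel hn

/-- If every point of a finite poset `P` is `G`-isolated for a finite family
`G` of upsets, then any two distinct points are separated by some upset in the
Heyting subalgebra generated by `G`. -/
theorem separation_of_isolated {α : Type*} [PartialOrder α] [Finite α]
    (G : Set (Set α)) (hG : ∀ g ∈ G, IsUpperSet g) (hGfin : G.Finite)
    (hiso : ∀ x y : α, (∀ n, simRel G n x y) → x = y) :
    ∀ x y : α, x ≠ y →
      ∃ U : Set α, HGen G U ∧ ((x ∈ U ∧ y ∉ U) ∨ (y ∈ U ∧ x ∉ U)) :=
  separation_of_isolated_general G hiso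
end

section
/- Let L be a finite algebraic signature and V a variety of L-algebras. If every k-generated algebra in V is finite, then there is a uniform bound N such that every k-generated algebra in V has cardinality at most N, and hence V contains only finitely many k-generated algebras up to isomorphism. -/
/-- An algebra for the signature given by operation symbols `L` with arities `ar`. -/
structure Alg (L : Type) (ar : L → ℕ) where
  carrier : Type
  op : ∀ f : L, (Fin (ar f) → carrier) → carrier

namespace Alg

variable {L : Type} {ar : L → ℕ}

/-- A subset closed under all the operations. -/
def ClosedUnder (A : Alg L ar) (S : Set A.carrier) : Prop :=
  ∀ (f : L) (args : Fin (ar f) → A.carrier), (∀ i, args i ∈ S) → A.op f args ∈ S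

/-- Membership in the subalgebra generated by `S`. -/
inductive Closure (A : Alg L ar) (S : Set A.carrier) : A.carrier → Prop
  | base {x : A.carrier} : x ∈ S → Closure A S x
  | op (f : L) (args : Fin (ar f) → A.carrier) :
      (∀ i, Closure A S (args i)) → Closure A S (A.op f args)

/-- Homomorphisms of algebras. -/
structure Hom (A B : Alg L ar) where
  toFun : A.carrier → B.carrier
  map_op : ∀ (f : L) (args : Fin (ar f) → A.carrier),
    toFun (A.op f args) = B.op f fun i => toFun (args i)

/-- Isomorphism of algebras. -/
def Iso (A B : Alg L ar) : Prop :=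
  ∃ e : A.carrier ≃ B.carrier,
    ∀ (f : L) (args : Fin (ar f) → A.carrier),
      e (A.op f args) = B.op f fun i => e (args i)

/-- The product algebra of a family of algebras. -/
def prodAlg (ι : Type) (A : ι → Alg L ar) : Alg L ar where
  carrier := ∀ i, (A i).carrier
  op f args i := (A i).op f fun j => args j i

/-- The binary product algebra. -/
def prod2 (A B : Alg L ar) : Alg L ar where
  carrier := A.carrier × B.carrier
  op f args := (A.op f fun i => (args i).1, B.op f fun i => (args i).2)

/-- The algebra structure on a subset closed under the operations. -/
def subAlg (A : Alg L ar) (S : Set A.carrier) (h : A.ClosedUnder S) : Alg L ar where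
  carrier := S
  op f args := ⟨A.op f fun i => (args i).1, h f _ fun i => (args i).2⟩

/-- An algebra is `k`-generated if some `k` elements generate it. -/
def KGen (k : ℕ) (A : Alg L ar) : Prop :=
  ∃ g : Fin k → A.carrier, ∀ x, Closure A (Set.range g) x

/-- A variety: a class of algebras closed under subalgebras, homomorphic
images and products. -/
def IsVariety (V : Alg L ar → Prop) : Prop :=
  (∀ (A : Alg L ar) (S : Set A.carrier) (h : A.ClosedUnder S), V A → V (A.subAlg S h)) ∧
  (∀ (A B : Alg L ar) (f : Hom A B), V A → Function.Surjective f.toFun → V B) ∧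
  (∀ (ι : Type) (A : ι → Alg L ar), (∀ i, V (A i)) → V (prodAlg ι A))

end Alg

/-!
Let `F` be the subalgebra generated by the diagonal `k`-tuple in the product of all
`k`-generated members of `V` with carrier some `Fin n`, each marked with a generating
`k`-tuple; there is only a set of these. Being in `V` and `k`-generated, `F` is finite.
Every `k`-generated `A ∈ V` is finite, hence isomorphic to one of the factors, and the
projection onto that factor is onto since its image contains the marked generators.
So `|A| ≤ |F|`, and `A` is isomorphic to one of the finitely many algebras on
`Fin n`, `n ≤ |F|`, over the finite signature.
-/

namespace Alg

variable {L : Type} {ar : L → ℕ}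

theorem closedUnder_closure (A : Alg L ar) (S : Set A.carrier) :
    A.ClosedUnder {x | Closure A S x} :=
  fun f args h => Closure.op f args h

theorem Closure.mem_of_closedUnder {A : Alg L ar} {S T : Set A.carrier}
    (hT : A.ClosedUnder T) (hST : S ⊆ T) {x : A.carrier} (hx : Closure A S x) : x ∈ T := by
  induction hx with
  | base hs => exact hST hs
  | op f args _ ih => exact hT f args ih

theorem Closure.map {A B : Alg L ar} (h : Hom A B) {S : Set A.carrier} {x : A.carrier}
    (hx : Closure A S x) : Closure B (h.toFun '' S) (h.toFun x) := by
  induction hx with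
  | base hs => exact Closure.base ⟨_, hs, rfl⟩
  | op f args _ ih => rw [h.map_op]; exact Closure.op f _ ih

theorem Hom.closedUnder_range {A B : Alg L ar} (h : Hom A B) :
    B.ClosedUnder (Set.range h.toFun) := by
  intro f args hargs
  choose a ha using hargs
  refine ⟨A.op f a, ?_⟩
  rw [h.map_op]
  simp only [ha]

theorem Hom.surjective_of_generates {A B : Alg L ar} (h : Hom A B) {S : Set B.carrier}
    (hS : ∀ y, Closure B S y) (hSh : S ⊆ Set.range h.toFun) : Function.Surjective h.toFun :=
  fun y => (hS y).mem_of_closedUnder h.closedUnder_range hSh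

theorem Hom.generates_comp {A B : Alg L ar} (h : Hom A B) (hh : Function.Surjective h.toFun)
    {k : ℕ} {g : Fin k → A.carrier} (hg : ∀ x, Closure A (Set.range g) x) :
    ∀ y, Closure B (Set.range (h.toFun ∘ g)) y := by
  intro y
  obtain ⟨x, rfl⟩ := hh y
  rw [Set.range_comp]
  exact (hg x).map h

theorem closure_subAlg {A : Alg L ar} {C : Set A.carrier} (hC : A.ClosedUnder C) {k : ℕ}
    {g : Fin k → A.carrier} (hg : ∀ j, g j ∈ C) {x : A.carrier}
    (hx : Closure A (Set.range g) x) (hxC : x ∈ C) :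
    Closure (A.subAlg C hC) (Set.range fun j => ⟨g j, hg j⟩) ⟨x, hxC⟩ := by
  induction hx with
  | base hs =>
    obtain ⟨j, rfl⟩ := hs
    exact Closure.base ⟨j, rfl⟩
  | op f args hargs ih =>
    have hargsC i : args i ∈ C :=
      (hargs i).mem_of_closedUnder hC (Set.range_subset_iff.2 hg)
    exact Closure.op (A := A.subAlg C hC) f (fun i => ⟨args i, hargsC i⟩)
      fun i => ih i (hargsC i)

theorem kGen_subAlg_closure (A : Alg L ar) {k : ℕ} (g : Fin k → A.carrier) :
    KGen k (A.subAlg {x | Closure A (Set.range g) x} (closedUnder_closure A _)) :=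
  ⟨fun j => ⟨g j, Closure.base ⟨j, rfl⟩⟩, fun x => closure_subAlg _ _ x.2 x.2⟩

def transport (A : Alg L ar) {β : Type} (e : A.carrier ≃ β) : Alg L ar where
  carrier := β
  op f args := e (A.op f fun i => e.symm (args i))

def transportHom (A : Alg L ar) {β : Type} (e : A.carrier ≃ β) : Hom A (A.transport e) where
  toFun := e
  map_op f args := by simp [transport]

theorem iso_transport (A : Alg L ar) {β : Type} (e : A.carrier ≃ β) : Iso A (A.transport e) :=
  ⟨e, (transportHom A e).map_op⟩

theorem Iso.natCard_eq {A B : Alg L ar} (h : Iso A B) : Nat.card A.carrier = Nat.card B.carrier :=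
  let ⟨e, _⟩ := h; Nat.card_congr e

structure MarkedFinAlg (V : Alg L ar → Prop) (k : ℕ) where
  n : ℕ
  op : ∀ f : L, (Fin (ar f) → Fin n) → Fin n
  gen : Fin k → Fin n
  mem : V ⟨Fin n, op⟩
  generates : ∀ x, Closure ⟨Fin n, op⟩ (Set.range gen) x

namespace MarkedFinAlg

variable {V : Alg L ar → Prop} {k : ℕ}

def alg (p : MarkedFinAlg V k) : Alg L ar := ⟨Fin p.n, p.op⟩

theorem natCard_alg (p : MarkedFinAlg V k) : Nat.card p.alg.carrier = p.n :=
  Nat.card_fin p.n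

variable (V k) in
def cover : Alg L ar :=
  (prodAlg (MarkedFinAlg V k) alg).subAlg
    {x | Closure _ (Set.range fun j (p : MarkedFinAlg V k) => p.gen j) x}
    (closedUnder_closure _ _)

theorem cover_mem (hV : IsVariety V) : V (cover V k) :=
  hV.1 _ _ _ (hV.2.2 _ _ fun p => p.mem)

theorem kGen_cover : KGen k (cover V k) :=
  kGen_subAlg_closure _ _

def proj (p : MarkedFinAlg V k) : Hom (cover V k) p.alg where
  toFun x := x.1 p
  map_op _ _ := rfl

theorem surjective_proj (p : MarkedFinAlg V k) : Function.Surjective p.proj.toFun := by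
  refine p.proj.surjective_of_generates p.generates ?_
  rintro _ ⟨j, rfl⟩
  exact ⟨⟨fun q => q.gen j, Closure.base ⟨j, rfl⟩⟩, rfl⟩

theorem n_le_natCard_cover [Finite (cover V k).carrier] (p : MarkedFinAlg V k) :
    p.n ≤ Nat.card (cover V k).carrier :=
  p.natCard_alg ▸ Nat.card_le_card_of_surjective _ p.surjective_proj

theorem exists_iso (hV : IsVariety V) {A : Alg L ar} (hA : V A) (hk : KGen k A)
    [Finite A.carrier] : ∃ p : MarkedFinAlg V k, Iso A p.alg := by
  obtain ⟨g, hg⟩ := hk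
  obtain ⟨n, ⟨e⟩⟩ := Finite.exists_equiv_fin A.carrier
  have he : Function.Surjective (transportHom A e).toFun := e.surjective
  exact ⟨⟨n, (A.transport e).op, e ∘ g, hV.2.1 _ _ _ hA he, (transportHom A e).generates_comp he hg⟩,
    iso_transport A e⟩

end MarkedFinAlg

theorem exists_enum_algs_fin_le [Finite L] (N : ℕ) :
    ∃ (m : ℕ) (R : Fin m → Alg L ar), ∀ n ≤ N, ∀ op : ∀ f : L, (Fin (ar f) → Fin n) → Fin n,
      ∃ i, R i = ⟨Fin n, op⟩ := by
  let mk (s : Σ n : Fin (N + 1), ∀ f : L, (Fin (ar f) → Fin n) → Fin n) : Alg L ar :=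
    ⟨Fin s.1, s.2⟩
  obtain ⟨m, ⟨e⟩⟩ :=
    Finite.exists_equiv_fin (Σ n : Fin (N + 1), ∀ f : L, (Fin (ar f) → Fin n) → Fin n)
  exact ⟨m, mk ∘ e.symm, fun n hn op =>
    ⟨e ⟨⟨n, by omega⟩, op⟩, congrArg mk (e.symm_apply_apply _)⟩⟩

end Alg

open Alg in
/-- For a finite signature, if every `k`-generated algebra in a variety `V` is
finite, then there is a uniform bound `N` on the cardinality of `k`-generated
algebras in `V`, and `V` contains only finitely many `k`-generated algebras up
to isomorphism. -/
theorem variety_kFinite_bound {L : Type} {ar : L → ℕ} [Finite L]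
    (V : Alg L ar → Prop) (hV : IsVariety V) (k : ℕ)
    (hfin : ∀ A : Alg L ar, V A → KGen k A → Finite A.carrier) :
    (∃ N : ℕ, ∀ A : Alg L ar, V A → KGen k A → Nat.card A.carrier ≤ N) ∧
    (∃ (m : ℕ) (R : Fin m → Alg L ar),
      ∀ A : Alg L ar, V A → KGen k A → ∃ i, Iso A (R i)) := by
  have := hfin _ (MarkedFinAlg.cover_mem hV) MarkedFinAlg.kGen_cover
  have marked (A : Alg L ar) (hA : V A) (hk : KGen k A) : ∃ p : MarkedFinAlg V k, Iso A p.alg :=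
    have := hfin A hA hk
    MarkedFinAlg.exists_iso hV hA hk
  set N := Nat.card (MarkedFinAlg.cover V k).carrier
  obtain ⟨m, R, hR⟩ := exists_enum_algs_fin_le (ar := ar) N
  refine ⟨⟨N, fun A hA hk => ?_⟩, m, R, fun A hA hk => ?_⟩ <;> obtain ⟨p, hp⟩ := marked A hA hk
  · rw [hp.natCard_eq, p.natCard_alg]
    exact p.n_le_natCard_cover
  · obtain ⟨i, hi⟩ := hR p.n p.n_le_natCard_cover p.op
    exact ⟨i, hi ▸ hp⟩
end
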